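/- arXiv:1905.01968 — 5 statements merged into one kernel-verified Lean document; each statement's English description precedes it below -/
import Mathlib

section
/- Let R be a commutative Noetherian ring, M a finitely generated R-module, and S a commutative R-algebra that is flat as an R-module. If M is reflexive over R, i.e. the natural evaluation map M → Hom_R(Hom_R(M, R), R) is bijective, then M ⊗_R S is reflexive over S, i.e. the natural evaluation map (M ⊗_R S) → Hom_S(Hom_S(M ⊗_R S, S), S) is bijective. -/
open TensorProduct

/-!
Hom out of a finitely presented module commutes with flat base change, so
`S ⊗[R] Dual R M ≃ Dual S (S ⊗[R] M)`. Applying this to `M` and to `Dual R M` (finite, hence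
finitely presented, over a Noetherian ring) exhibits the evaluation map of `S ⊗[R] M` as the base
change of the evaluation map of `M`.
-/

theorem IsBaseChange.bijective_of_comp_eq {R S M N N' : Type*} [CommSemiring R] [CommSemiring S]
    [Algebra R S] [AddCommMonoid M] [Module R M] [AddCommMonoid N] [Module R N] [Module S N]
    [IsScalarTower R S N] [AddCommMonoid N'] [Module R N'] [Module S N'] [IsScalarTower R S N']
    {f : M →ₗ[R] N} {f' : M →ₗ[R] N'} (hf : IsBaseChange S f) (hf' : IsBaseChange S f')
    {g : N →ₗ[S] N'} (hg : g.restrictScalars R ∘ₗ f = f') : Function.Bijective g := by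
  have : g = hf'.equiv.toLinearMap ∘ₗ hf.equiv.symm.toLinearMap :=
    hf.algHom_ext _ _ fun m ↦ by simp [hf.equiv_symm_apply, ← hg]
  rw [this]
  exact (hf.equiv.symm.trans hf'.equiv).bijective

namespace Module

variable {R S M : Type*} [CommRing R] [CommRing S] [Algebra R S] [AddCommGroup M] [Module R M]
  [Flat R S] [FinitePresentation R M]

theorem Dual.isBaseChange_baseChange :
    IsBaseChange S (Dual.baseChange S : Dual R M →ₗ[R] Dual S (S ⊗[R] M)) :=
  (IsBaseChange.iff_of_equiv_comm (LinearEquiv.refl R _)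
    (LinearEquiv.congrRight (AlgebraTensorModule.rid R S S))
    (by ext; simp [LinearEquiv.congrRight, Algebra.smul_def])).mp
    (FinitePresentation.isBaseChange_map R M R S)

theorem Dual.baseChange_eval_apply (m : M) (y : S ⊗[R] Dual R M) :
    (Dual.eval R M m).baseChange S y = Dual.isBaseChange_baseChange.equiv y (1 ⊗ₜ m) := by
  induction y using TensorProduct.induction_on with
  | zero => simp
  | tmul s f => simp [IsBaseChange.equiv_tmul, Algebra.smul_def, mul_comm]
  | add y z hy hz => simp [hy, hz]

theorem Dual.eval_baseChange_bijective [FinitePresentation R (Dual R M)]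
    (h : Function.Bijective (Dual.eval R M)) :
    Function.Bijective (Dual.eval S (S ⊗[R] M)) := by
  have hM := Dual.isBaseChange_baseChange (R := R) (S := S) (M := M)
  have hDD : IsBaseChange S
      (hM.equiv.symm.dualMap.toLinearMap.restrictScalars R ∘ₗ Dual.baseChange S) :=
    Dual.isBaseChange_baseChange.comp (IsBaseChange.ofEquiv _)
  refine (TensorProduct.isBaseChange R M S).bijective_of_comp_eq
    (hDD.comp_equiv (.ofBijective _ h)) ?_
  ext m ξ
  obtain ⟨y, rfl⟩ := hM.equiv.surjective ξ
  simp [baseChange_eval_apply]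

end Module

/-- If `R` is Noetherian, `M` a finitely generated `R`-module, and `S` a flat commutative
`R`-algebra, then reflexivity of `M` over `R` (bijectivity of the evaluation map into the
double dual) implies reflexivity of `S ⊗_R M` over `S`. -/
theorem stmt1 (R S M : Type*) [CommRing R] [IsNoetherianRing R] [CommRing S] [Algebra R S]
    [Module.Flat R S] [AddCommGroup M] [Module R M] [Module.Finite R M]
    (h : Function.Bijective (Module.Dual.eval R M)) :
    Function.Bijective (Module.Dual.eval S (S ⊗[R] M)) := by
  have := Module.finitePresentation_of_finite R M
  have := Module.finitePresentation_of_finite R (Module.Dual R M)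
  exact Module.Dual.eval_baseChange_bijective h
end

section
/- Let R be a commutative Noetherian ring, M a finitely generated R-module, and S a commutative R-algebra that is faithfully flat as an R-module. If M ⊗_R S is reflexive over S, i.e. the natural evaluation map (M ⊗_R S) → Hom_S(Hom_S(M ⊗_R S, S), S) is bijective, then M is reflexive over R, i.e. the natural evaluation map M → Hom_R(Hom_R(M, R), R) is bijective. -/
/-!
For a flat `R`-algebra `S` and a finitely presented `R`-module `M`, dualizing commutes with base
change: `S ⊗ M^* ≅ (S ⊗ M)^*`. Over a Noetherian ring both `M` and `M^*` are finitely presented,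
so applying this twice identifies `S ⊗ (M → M^**)` with the evaluation map of `S ⊗ M` up to
isomorphisms, and faithful flatness of `S` descends its bijectivity to `M → M^**`.
-/

open TensorProduct Module

section BaseChange

variable (R S M : Type*) [CommRing R] [CommRing S] [Algebra R S] [Module.Flat R S]
  [AddCommGroup M] [Module R M] [Module.FinitePresentation R M]

theorem Module.FinitePresentation.isBaseChange_dualBaseChange :
    IsBaseChange S (Dual.baseChange S : Dual R M →ₗ[R] _) := by
  refine (IsBaseChange.iff_of_equiv_comm (LinearEquiv.refl R _)
    (LinearEquiv.congrRight (AlgebraTensorModule.rid R S S)) ?_).mp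
    (FinitePresentation.isBaseChange_map R M R S)
  ext f m
  simp [LinearEquiv.congrRight]

theorem Module.Dual.eval_lTensor_bijective_iff [Module.FinitePresentation R (Dual R M)] :
    Function.Bijective ((Dual.eval R M).lTensor S) ↔
      Function.Bijective (Dual.eval S (S ⊗[R] M)) := by
  let e₁ := (FinitePresentation.isBaseChange_dualBaseChange R S M).equiv
  let e₂ := (FinitePresentation.isBaseChange_dualBaseChange R S (Dual R M)).equiv
  have comm : e₂ ∘ (Dual.eval R M).lTensor S = e₁.dualMap ∘ Dual.eval S (S ⊗[R] M) := by
    funext x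
    refine LinearMap.ext fun y ↦ ?_
    induction x using TensorProduct.induction_on with
    | zero => simp
    | add a b ha hb => simp_all
    | tmul s m =>
      induction y using TensorProduct.induction_on with
      | zero => simp
      | add a b ha hb => simp_all
      | tmul t f => simp [e₁, e₂, IsBaseChange.equiv_tmul, mul_comm]
  rw [← EquivLike.comp_bijective _ e₂, comm, EquivLike.comp_bijective]

end BaseChange

/-- If `R` is Noetherian, `M` a finitely generated `R`-module, and `S` a faithfully flat
commutative `R`-algebra, then reflexivity of `S ⊗_R M` over `S` (bijectivity of the
evaluation map into the double dual) implies reflexivity of `M` over `R`. -/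
theorem stmt2 (R S M : Type*) [CommRing R] [IsNoetherianRing R] [CommRing S] [Algebra R S]
    [Module.FaithfullyFlat R S] [AddCommGroup M] [Module R M] [Module.Finite R M]
    (h : Function.Bijective (Module.Dual.eval S (S ⊗[R] M))) :
    Function.Bijective (Module.Dual.eval R M) := by
  have := Module.finitePresentation_of_finite R M
  have := Module.finitePresentation_of_finite R (Module.Dual R M)
  rw [← Module.FaithfullyFlat.lTensor_bijective_iff_bijective R S]
  exact (Module.Dual.eval_lTensor_bijective_iff R S M).mpr h
end

section
/- Let R be a commutative ring, let ℓ ≥ 2, let A be an ℓ × ℓ matrix over R, and let r, s ∈ R. Define an (ℓ+1) × (ℓ+1) matrix Ã over R as follows (indices 1,…,ℓ+1): Ã_{ij} = A_{ij} for all 1 ≤ i, j ≤ ℓ except that Ã_{ℓ-1,ℓ-1} = A_{ℓ-1,ℓ-1} + r², Ã_{ℓ-1,ℓ} = A_{ℓ-1,ℓ} + rs, Ã_{ℓ,ℓ-1} = A_{ℓ,ℓ-1} + rs, and Ã_{ℓ,ℓ} = A_{ℓ,ℓ} + s²; moreover Ã_{i,ℓ+1} = Ã_{ℓ+1,i} =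 0 for 1 ≤ i ≤ ℓ-2, Ã_{ℓ-1,ℓ+1} = Ã_{ℓ+1,ℓ-1} = -r, Ã_{ℓ,ℓ+1} = Ã_{ℓ+1,ℓ} = -s, and Ã_{ℓ+1,ℓ+1} = 1. Then det Ã = det A. -/
/-- Blowing up a point lying on exactly two exceptional curves, with multiplicities `r` and
`s`, does not change the determinant of (the negative of) the intersection matrix.
Indices `1, …, ℓ+1` in the paper correspond to the indices `0, …, ℓ` of `Fin (ℓ+1)` here,
so the distinguished rows/columns `ℓ-1, ℓ` (1-based) become `ℓ-2, ℓ-1` (0-based). -/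
theorem stmt3 {R : Type*} [CommRing R] (ℓ : ℕ) (hℓ : 2 ≤ ℓ)
    (A : Matrix (Fin ℓ) (Fin ℓ) R) (r s : R) :
    (Matrix.of (fun i j : Fin (ℓ + 1) =>
      if hi : (i : ℕ) < ℓ then
        if hj : (j : ℕ) < ℓ then
          A ⟨i, hi⟩ ⟨j, hj⟩ +
            (if (i : ℕ) = ℓ - 2 then r else if (i : ℕ) = ℓ - 1 then s else 0) *
              (if (j : ℕ) = ℓ - 2 then r else if (j : ℕ) = ℓ - 1 then s else 0)
        else
          -(if (i : ℕ) = ℓ - 2 then r else if (i : ℕ) = ℓ - 1 then s else 0)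
      else
        if hj : (j : ℕ) < ℓ then
          -(if (j : ℕ) = ℓ - 2 then r else if (j : ℕ) = ℓ - 1 then s else 0)
        else 1)).det = A.det := by
  classical
  set v : Fin ℓ → R := fun i => if (i : ℕ) = ℓ - 2 then r else if (i : ℕ) = ℓ - 1 then s else 0
    with hv
  have key : (Matrix.of (fun i j : Fin (ℓ + 1) =>
      if hi : (i : ℕ) < ℓ then
        if hj : (j : ℕ) < ℓ then
          A ⟨i, hi⟩ ⟨j, hj⟩ +
            (if (i : ℕ) = ℓ - 2 then r else if (i : ℕ) = ℓ - 1 then s else 0) *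
              (if (j : ℕ) = ℓ - 2 then r else if (j : ℕ) = ℓ - 1 then s else 0)
        else
          -(if (i : ℕ) = ℓ - 2 then r else if (i : ℕ) = ℓ - 1 then s else 0)
      else
        if hj : (j : ℕ) < ℓ then
          -(if (j : ℕ) = ℓ - 2 then r else if (j : ℕ) = ℓ - 1 then s else 0)
        else 1)) =
      (Matrix.fromBlocks
        (Matrix.of fun i j => A i j + v i * v j)
        (Matrix.of fun i (_ : Fin 1) => -v i)
        (Matrix.of fun (_ : Fin 1) j => -v j)
        (1 : Matrix (Fin 1) (Fin 1) R)).submatrix finSumFinEquiv.symm finSumFinEquiv.symm := by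
    ext i j
    simp only [Matrix.submatrix_apply]
    induction i using Fin.addCases with
    | left i =>
      induction j using Fin.addCases with
      | left j =>
        simp [Fin.is_lt, v]
      | right j =>
        have : ¬ ((Fin.natAdd ℓ j : Fin (ℓ + 1)) : ℕ) < ℓ := by simp
        simp [this, v]
    | right i =>
      have hi : ¬ ((Fin.natAdd ℓ i : Fin (ℓ + 1)) : ℕ) < ℓ := by simp
      induction j using Fin.addCases with
      | left j =>
        simp [hi, Fin.is_lt, v, Subsingleton.elim i 0]
      | right j =>
        have : ¬ ((Fin.natAdd ℓ j : Fin (ℓ + 1)) : ℕ) < ℓ := by simp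
        simp [hi, this, Subsingleton.elim i 0, Subsingleton.elim j 0, Matrix.one_apply]
  rw [key, Matrix.det_submatrix_equiv_self, Matrix.det_fromBlocks_one₂₂]
  congr 1
  ext i j
  simp [Matrix.mul_apply, Fin.sum_univ_one]
end

section
/- Let k be a field of characteristic 2 and let K = k(u, w) be the field of rational functions in two variables u, w over k (the fraction field of the polynomial ring k[u, w]). Set v := w² / (u(u + 1)) ∈ K. Then in the module of Kähler differentials Ω_{K/k}, with d the universal derivation, one has (u·v³)⁻⁴ · d(u²·v⁵) = (u⁴(u + 1)⁶ / w¹⁴) · d u. -/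
open MvPolynomial

/-- In characteristic 2, with `K = k(u,w)` and `v = w²/(u(u+1))`, one has
`(uv³)⁻⁴ d(u²v⁵) = (u⁴(u+1)⁶/w¹⁴) du` in the Kähler differentials `Ω_{K/k}`. -/
theorem stmt5 (k K : Type*) [Field k] [CharP k 2] [Field K]
    [Algebra (MvPolynomial (Fin 2) k) K] [IsFractionRing (MvPolynomial (Fin 2) k) K]
    [Algebra k K] [IsScalarTower k (MvPolynomial (Fin 2) k) K]
    (u w v : K)
    (hu : u = algebraMap (MvPolynomial (Fin 2) k) K (X 0))
    (hw : w = algebraMap (MvPolynomial (Fin 2) k) K (X 1))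
    (hv : v = w ^ 2 / (u * (u + 1))) :
    ((u * v ^ 3)⁻¹) ^ 4 • KaehlerDifferential.D k K (u ^ 2 * v ^ 5)
      = (u ^ 4 * (u + 1) ^ 6 / w ^ 14) • KaehlerDifferential.D k K u := by
  have hinj : Function.Injective (algebraMap (MvPolynomial (Fin 2) k) K) :=
    IsFractionRing.injective _ _
  haveI : CharP K 2 := charP_of_injective_algebraMap (algebraMap k K).injective 2
  have hu0 : u ≠ 0 := by
    rw [hu, Ne, map_eq_zero_iff _ hinj]; exact X_ne_zero _
  have hw0 : w ≠ 0 := by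
    rw [hw, Ne, map_eq_zero_iff _ hinj]; exact X_ne_zero _
  have hu1 : u + 1 ≠ 0 := by
    rw [hu]
    intro h
    have h1 : algebraMap (MvPolynomial (Fin 2) k) K (X 0 + 1) = 0 := by
      rwa [map_add, map_one]
    have h2 := (map_eq_zero_iff _ hinj).mp h1
    have h3 := congrArg constantCoeff h2
    simp at h3
  set D := KaehlerDifferential.D k K with hD
  have hsq : ∀ a : K, D (a ^ 2) = 0 := fun a => by
    rw [pow_two, Derivation.leibniz, ← add_smul, CharTwo.add_self_eq_zero, zero_smul]
  have hDs : D (u * (u + 1)) = D u := by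
    have h1 : D (u + 1) = D u := by rw [map_add, Derivation.map_one_eq_zero, add_zero]
    rw [Derivation.leibniz, h1, ← add_smul]
    have : u + (u + 1) = 1 := by rw [← add_assoc, CharTwo.add_self_eq_zero, zero_add]
    rw [this, one_smul]
  have hDv : D v = (w ^ 2 * ((u * (u + 1))⁻¹) ^ 2) • D u := by
    rw [hv, div_eq_mul_inv, Derivation.leibniz, hsq, smul_zero, add_zero,
      Derivation.leibniz_inv, hDs, CharTwo.neg_eq, smul_smul, inv_pow]
  have hv5 : D (v ^ 5) = v ^ 4 • D v := by
    have h5 : v ^ 5 = (v ^ 2) ^ 2 * v := by ring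
    rw [h5, Derivation.leibniz, hsq, smul_zero, add_zero]
    congr 1
    ring
  have hlhs : D (u ^ 2 * v ^ 5) = (u ^ 2 * (v ^ 4 * (w ^ 2 * ((u * (u + 1))⁻¹) ^ 2))) • D u := by
    rw [Derivation.leibniz, hsq, smul_zero, add_zero, hv5, hDv, smul_smul, smul_smul]
    congr 1
    ring
  rw [hlhs, smul_smul]
  congr 1
  rw [hv]
  field_simp
end

section
/- Let k be a field of characteristic p > 0, let c ≥ 1 be an integer, and let A = k[x, y, z]/(x y + z^{c p}) be the quotient of the polynomial ring in three variables by the principal ideal generated by x y + z^{c p}. Then there exists a k-derivation δ : A → A with δ(x̄) = 0, δ(ȳ) = 0 and δ(z̄) = 1, where x̄, ȳ, z̄ denote the images of x, y, z in A. In particular, δ does not map the ideal (x̄, ȳ, z̄) of A into itself. -/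
open MvPolynomial
set_option synthInstance.maxHeartbeats 1000000
set_option maxHeartbeats 2000000

/-- In characteristic `p > 0`, on `A = k[x,y,z]/(xy + z^{cp})` there is a `k`-derivation
`δ` with `δ(x̄) = 0`, `δ(ȳ) = 0`, `δ(z̄) = 1`; in particular `δ` does not map the ideal
`(x̄, ȳ, z̄)` into itself. -/
theorem stmt11 (k : Type*) [Field k] (p : ℕ) (hp : 0 < p) [CharP k p] (c : ℕ) (hc : 1 ≤ c)
    (I : Ideal (MvPolynomial (Fin 3) k))
    (hI : I = Ideal.span {X 0 * X 1 + X 2 ^ (c * p)}) :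
    ∃ δ : Derivation k (MvPolynomial (Fin 3) k ⧸ I) (MvPolynomial (Fin 3) k ⧸ I),
      δ (Ideal.Quotient.mk I (X 0)) = 0 ∧
      δ (Ideal.Quotient.mk I (X 1)) = 0 ∧
      δ (Ideal.Quotient.mk I (X 2)) = 1 ∧
      ¬ ∀ a ∈ Ideal.span {Ideal.Quotient.mk I (X 0), Ideal.Quotient.mk I (X 1),
            Ideal.Quotient.mk I (X 2)},
          δ a ∈ Ideal.span {Ideal.Quotient.mk I (X 0), Ideal.Quotient.mk I (X 1),
            Ideal.Quotient.mk I (X 2)} := by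
  set P := MvPolynomial (Fin 3) k with hP
  set g : P := X 0 * X 1 + X 2 ^ (c * p) with hg
  -- the generator has vanishing z-derivative
  have hg0 : pderiv (2 : Fin 3) g = 0 := by
    simp [hg, Derivation.leibniz_pow, pderiv_X, nsmul_eq_mul,
      Pi.single_eq_of_ne (by decide : (0 : Fin 3) ≠ 2),
      Pi.single_eq_of_ne (by decide : (1 : Fin 3) ≠ 2)]
  -- the linear map `f ↦ mk (∂f/∂z)`
  set D : P →ₗ[k] (P ⧸ I) :=
    (Ideal.Quotient.mkₐ k I).toLinearMap.comp (pderiv (2 : Fin 3)).toLinearMap with hD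
  have hDapp : ∀ f : P, D f = Ideal.Quotient.mk I (pderiv (2 : Fin 3) f) := fun f => rfl
  have hker : I.restrictScalars k ≤ LinearMap.ker D := by
    intro f hf
    have hf' : f ∈ I := hf
    rw [hI, Ideal.mem_span_singleton] at hf'
    obtain ⟨q, rfl⟩ := hf'
    rw [LinearMap.mem_ker, hDapp, Derivation.leibniz, hg0]
    simp only [smul_eq_mul, mul_zero, add_zero]
    rw [Ideal.Quotient.eq_zero_iff_mem, hI]
    exact Ideal.mul_mem_right _ _ (Ideal.subset_span rfl)
  set ℓ : (P ⧸ I) →ₗ[k] (P ⧸ I) :=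
    (Submodule.liftQ (I.restrictScalars k) D hker).comp
      (Submodule.Quotient.restrictScalarsEquiv k I).symm.toLinearMap with hℓ
  have key : ∀ f : P, ℓ (Ideal.Quotient.mk I f) = Ideal.Quotient.mk I (pderiv (2 : Fin 3) f) := by
    intro f
    rw [hℓ]
    simp only [LinearMap.comp_apply, LinearEquiv.coe_toLinearMap]
    have : (Ideal.Quotient.mk I f : P ⧸ I) = Submodule.Quotient.mk f := rfl
    rw [this, Submodule.Quotient.restrictScalarsEquiv_symm_mk, Submodule.liftQ_apply]
    exact hDapp f
  set δ : Derivation k (P ⧸ I) (P ⧸ I) :=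
    { toLinearMap := ℓ
      map_one_eq_zero' := by
        have : (1 : P ⧸ I) = Ideal.Quotient.mk I 1 := rfl
        rw [this, key]; simp
      leibniz' := by
        intro a b
        obtain ⟨f, rfl⟩ := Ideal.Quotient.mk_surjective a
        obtain ⟨q, rfl⟩ := Ideal.Quotient.mk_surjective b
        have : Ideal.Quotient.mk I f * Ideal.Quotient.mk I q = Ideal.Quotient.mk I (f * q) := by
          rw [map_mul]
        rw [this, key, key, key, Derivation.leibniz]
        simp [smul_eq_mul] } with hδ
  have hδapp : ∀ f : P, δ (Ideal.Quotient.mk I f) = Ideal.Quotient.mk I (pderiv (2 : Fin 3) f) :=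
    key
  refine ⟨δ, ?_, ?_, ?_, ?_⟩
  · rw [hδapp]; simp [pderiv_X, Pi.single_eq_of_ne (by decide : (0 : Fin 3) ≠ 2)]
  · rw [hδapp]; simp [pderiv_X, Pi.single_eq_of_ne (by decide : (1 : Fin 3) ≠ 2)]
  · rw [hδapp]; simp [pderiv_X]
  · intro h
    have hz : Ideal.Quotient.mk I (X 2) ∈ Ideal.span {Ideal.Quotient.mk I (X 0),
        Ideal.Quotient.mk I (X 1), Ideal.Quotient.mk I (X 2)} :=
      Ideal.subset_span (by simp)
    have h1 : (1 : P ⧸ I) ∈ Ideal.span {Ideal.Quotient.mk I (X 0),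
        Ideal.Quotient.mk I (X 1), Ideal.Quotient.mk I (X 2)} := by
      have := h _ hz
      rwa [hδapp, pderiv_X, Pi.single_eq_same, map_one] at this
    -- the ideal (x,y,z) upstairs
    set m : Ideal P := Ideal.span {X 0, X 1, X 2} with hm
    have hgm : g ∈ m := by
      refine Ideal.add_mem _ ?_ ?_
      · exact Ideal.mul_mem_right _ _ (Ideal.subset_span (by simp))
      · have : (X 2 : P) ^ (c * p) = X 2 ^ (c * p - 1) * X 2 := by
          rw [← pow_succ]
          congr 1
          have h1 : 0 < c * p := Nat.mul_pos hc hp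
          omega
        rw [this]
        exact Ideal.mul_mem_left _ _ (Ideal.subset_span (by simp))
    have hIm : I ≤ m := by
      rw [hI, Ideal.span_le, Set.singleton_subset_iff]
      exact hgm
    -- downstairs ideal is the image of m
    have himg : Ideal.span {Ideal.Quotient.mk I (X 0), Ideal.Quotient.mk I (X 1),
        Ideal.Quotient.mk I (X 2)} = Ideal.map (Ideal.Quotient.mk I) m := by
      rw [hm, Ideal.map_span]
      congr 1
      simp [Set.image_insert_eq]
    rw [himg, Ideal.mem_map_iff_of_surjective _ Ideal.Quotient.mk_surjective] at h1
    obtain ⟨f, hfm, hf1⟩ := h1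
    have hdiff : f - 1 ∈ I := by
      rw [← Ideal.Quotient.eq_zero_iff_mem, map_sub, hf1, map_one, sub_self]
    have h1m : (1 : P) ∈ m := by
      have : (1 : P) = f - (f - 1) := by ring
      rw [this]
      exact Ideal.sub_mem _ hfm (hIm hdiff)
    -- but m is a proper ideal: evaluate at 0
    have : m ≤ RingHom.ker (eval (0 : Fin 3 → k)) := by
      rw [hm, Ideal.span_le]
      intro q hq
      simp only [Set.mem_insert_iff, Set.mem_singleton_iff] at hq
      rcases hq with rfl | rfl | rfl <;>
        exact SetLike.mem_coe.mpr (RingHom.mem_ker.mpr (by rw [eval_X]; rfl))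
    have := this h1m
    simp [RingHom.mem_ker] at this
end
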